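/- arXiv:math/9809118 — 3 statements merged into one kernel-verified Lean document; each statement's English description precedes it below -/
import Mathlib

section
/- Let T be a ℤ-weighted tile made up of rectangles whose corners all have rational coordinates, and assume the weighted area of T is not zero. Then there exists a positive integer w such that the family T(ℕ) = {T(k) : k ∈ ℕ, k ≥ 1} of positive-integer rescalings of T ℤ-tiles w times a square; that is, there exist s > 0, integers a₁,…,a_n, positive integers k₁,…,k_n and tiles T̃ᵢ, each a translate of T(kᵢ), with w·𝟙_{[0,s)×[0,s)} = ∑ᵢ aᵢ·T̃ᵢ. -/
/-!
After scaling by a common denominator `q` of the corners, `T` is the step function on the grid of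
mesh `1/q` read off from a Laurent polynomial `P ∈ ℤ[x^±1, y^±1]`, the rescaling `T(k)` is read off
from `P(x^k, y^k)` times the `k × k` block `(1 + ⋯ + x^(k-1))(1 + ⋯ + y^(k-1))`, and translating
a tile by a grid vector multiplies it by a monomial.

The constant `P(1, 1)`, which is `q²` times the weighted area, lies in the ideal generated by the
`P(x^k, y^k)` for `k ≥ 1`. Indeed, writing `P = ∑ cₘ tₘ` with monomials (hence units) `tₘ`, the
power sums `∑ cₘ tₘ^k` for `k ≥ 1` determine the one for `k = 0` modulo any ideal, by eliminating
the `tₘ` one at a time. Multiplying the resulting identity by an `m × m` block, where `m` is a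
common multiple of the `k` involved, writes `|P(1, 1)|` times a square as an integer combination of
translated tiles.
-/

open Finset

/-- Indicator (with value 1) of the rectangle `[b1,b2) × [c1,c2)`, ℤ-valued. -/
noncomputable def rectIndZ (b1 b2 c1 c2 : ℝ) (p : ℝ × ℝ) : ℤ :=
  if b1 ≤ p.1 ∧ p.1 < b2 ∧ c1 ≤ p.2 ∧ p.2 < c2 then 1 else 0

open AddMonoidAlgebra

theorem Ideal.sum_mem_of_forall_sum_mul_pow_mem {R ι : Type*} [CommRing R] {I : Ideal R}
    (s : Finset ι) {t : ι → R} (ht : ∀ j ∈ s, IsUnit (t j)) (c : ι → R)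
    (h : ∀ k, 0 < k → ∑ j ∈ s, c j * t j ^ k ∈ I) : ∑ j ∈ s, c j ∈ I := by
  classical
  induction s using Finset.induction_on generalizing c with
  | empty => simp
  | insert j₀ s hj₀ ih =>
    -- Multiplying `c` by `t - t j₀` kills the `j₀`-term, so the sums over `s` fall under `ih`.
    have hdiff : ∀ k, ∑ j ∈ s, c j * (t j - t j₀) * t j ^ k
        = ∑ j ∈ insert j₀ s, c j * t j ^ (k + 1) - t j₀ * ∑ j ∈ insert j₀ s, c j * t j ^ k := by
      intro k
      have : ∑ j ∈ s, c j * (t j - t j₀) * t j ^ k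
          = ∑ j ∈ s, c j * t j ^ (k + 1) - t j₀ * ∑ j ∈ s, c j * t j ^ k := by
        rw [mul_sum, ← sum_sub_distrib]
        exact sum_congr rfl fun j _ => by ring
      rw [this, sum_insert hj₀, sum_insert hj₀]
      ring
    have hs := ih (fun j hj => ht j (mem_insert_of_mem hj)) (fun j => c j * (t j - t j₀))
      fun k hk => hdiff k ▸ sub_mem (h _ k.succ_pos) (I.mul_mem_left _ (h k hk))
    have h₀ : t j₀ * ∑ j ∈ insert j₀ s, c j
        = ∑ j ∈ insert j₀ s, c j * t j ^ 1 - ∑ j ∈ s, c j * (t j - t j₀) * t j ^ 0 := by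
      rw [hdiff 0]
      simp
    rw [← I.unit_mul_mem_iff_mem (ht j₀ (mem_insert_self j₀ s)), h₀]
    exact sub_mem (h 1 one_pos) (by simpa using hs)

section GroupAlgebra

variable {R G : Type*} [CommRing R] [AddCommGroup G]

noncomputable def rescale (κ : ℕ) : R[G] →+* R[G] :=
  mapDomainRingHom R (DistribSMul.toAddMonoidHom G κ)

lemma rescale_single (κ : ℕ) (m : G) (r : R) : rescale κ (single m r) = single (κ • m) r := by
  simp [rescale, mapDomain_single]

noncomputable def augmentation : R[G] →ₐ[R] R := lift R R G 1

lemma augmentation_single (m : G) (r : R) : augmentation (single m r) = r := by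
  simp [augmentation, lift_single]

lemma isUnit_single_one (m : G) : IsUnit (single m (1 : R)) :=
  IsUnit.of_mul_eq_one (single (-m) 1) (by simp [single_mul_single, one_def])

theorem algebraMap_augmentation_mem_span_rescale (f : R[G]) :
    algebraMap R R[G] (augmentation f) ∈ Ideal.span {g | ∃ k, 0 < k ∧ rescale k f = g} := by
  have hrescale : ∀ k, rescale k f
      = ∑ m ∈ f.coeff.support, algebraMap R R[G] (f.coeff m) * single m 1 ^ k := by
    intro k
    conv_lhs => rw [← sum_coeff_single f]
    rw [map_finsuppSum, Finsupp.sum]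
    exact sum_congr rfl fun m _ => by simp [rescale_single, single_pow, single_mul_single]
  have haug : augmentation f = ∑ m ∈ f.coeff.support, f.coeff m := by
    conv_lhs => rw [← sum_coeff_single f]
    simp [Finsupp.sum, augmentation_single]
  rw [haug, map_sum]
  exact Ideal.sum_mem_of_forall_sum_mul_pow_mem (t := fun m => single m 1) _
    (fun m _ => isUnit_single_one m) _
    fun k hk => Ideal.subset_span ⟨k, hk, hrescale k⟩

end GroupAlgebra

noncomputable def rectPoly (a b c e : ℤ) : ℤ[ℤ × ℤ] := ∑ m ∈ Ico a b ×ˢ Ico c e, single m 1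

lemma coeff_rectPoly (a b c e : ℤ) (x : ℤ × ℤ) :
    (rectPoly a b c e).coeff x = if a ≤ x.1 ∧ x.1 < b ∧ c ≤ x.2 ∧ x.2 < e then 1 else 0 := by
  classical
  simp [rectPoly, coeff_sum, Finsupp.single_apply, and_assoc]

lemma augmentation_rectPoly {a b c e : ℤ} (hab : a ≤ b) (hce : c ≤ e) :
    augmentation (rectPoly a b c e) = (b - a) * (e - c) := by
  simp [rectPoly, augmentation_single, hab, hce]

noncomputable def inflate (κ : ℕ) (f : ℤ[ℤ × ℤ]) : ℤ[ℤ × ℤ] := rescale κ f * rectPoly 0 κ 0 κ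

lemma coeff_inflate {κ : ℕ} (hκ : 0 < κ) (f : ℤ[ℤ × ℤ]) (x : ℤ × ℤ) :
    (inflate κ f).coeff x = f.coeff (x.1 / κ, x.2 / κ) := by
  induction f using induction_linear with
  | zero => simp [inflate]
  | add f g hf hg => simp_all [inflate, add_mul]
  | single m r =>
    classical
    have hκ' : (0 : ℤ) < κ := by exact_mod_cast hκ
    simp only [inflate, rescale_single, coeff_single_mul_apply, coeff_rectPoly, coeff_single,
      Finsupp.single_apply, Prod.ext_iff, Prod.fst_add, Prod.snd_add, Prod.fst_neg, Prod.snd_neg,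
      Prod.fst_mul, Prod.snd_mul, Prod.fst_natCast, Prod.snd_natCast, nsmul_eq_mul, mul_ite,
      mul_one, mul_zero]
    refine if_congr ?_ rfl rfl
    rw [eq_comm (a := m.1), eq_comm (a := m.2), Int.ediv_eq_iff_of_pos hκ',
      Int.ediv_eq_iff_of_pos hκ']
    simp only [le_neg_add_iff_add_le, add_zero, neg_add_lt_iff_lt_add, and_assoc, mul_comm]

lemma inflate_rectPoly {κ : ℕ} (hκ : 0 < κ) (a b c e : ℤ) :
    inflate κ (rectPoly a b c e) = rectPoly (κ * a) (κ * b) (κ * c) (κ * e) := by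
  have hκ' : (0 : ℤ) < κ := by exact_mod_cast hκ
  ext x
  simp only [coeff_inflate hκ, coeff_rectPoly, Int.le_ediv_iff_mul_le hκ',
    Int.ediv_lt_iff_lt_mul hκ', mul_comm]

theorem exists_sum_mul_inflate_eq_smul_square (P : ℤ[ℤ × ℤ]) {z : ℤ} (hz : augmentation P ∣ z) :
    ∃ m : ℕ, 0 < m ∧ ∃ (n : ℕ) (k : Fin n → ℕ) (Q : Fin n → ℤ[ℤ × ℤ]), (∀ j, 0 < k j) ∧
      ∑ j, Q j * inflate (k j) P = z • rectPoly 0 m 0 m := by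
  obtain ⟨t, rfl⟩ := hz
  have hmem : algebraMap ℤ ℤ[ℤ × ℤ] (augmentation P * t)
      ∈ Ideal.span {g | ∃ k, 0 < k ∧ rescale k P = g} := by
    rw [map_mul]
    exact Ideal.mul_mem_right _ _ (algebraMap_augmentation_mem_span_rescale P)
  obtain ⟨n, c, g, hcg⟩ := Submodule.mem_span_set'.mp hmem
  choose k hk hkg using fun j => (g j).2
  set m := ∏ j, k j
  have hsquare : ∀ j,
      inflate (k j) (rectPoly 0 (m / k j : ℕ) 0 (m / k j : ℕ)) = rectPoly 0 m 0 m := by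
    intro j
    rw [inflate_rectPoly (hk j), ← Nat.cast_mul,
      Nat.mul_div_cancel' (dvd_prod_of_mem _ (mem_univ j))]
    simp only [mul_zero, m]
  refine ⟨m, prod_pos fun j _ => hk j, n, k,
    fun j => c j * rescale (k j) (rectPoly 0 (m / k j : ℕ) 0 (m / k j : ℕ)), hk, ?_⟩
  calc ∑ j, c j * rescale (k j) (rectPoly 0 (m / k j : ℕ) 0 (m / k j : ℕ)) * inflate (k j) P
      = ∑ j, c j * rescale (k j) P * rectPoly 0 m 0 m :=
        sum_congr rfl fun j _ => by rw [← hsquare j]; simp only [inflate]; ring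
    _ = (augmentation P * t) • rectPoly 0 m 0 m := by
        rw [← sum_mul, Algebra.smul_def, ← hcg]
        simp only [smul_eq_mul, hkg]

noncomputable def gridFun (q : ℝ) : ℤ[ℤ × ℤ] →+ (ℝ × ℝ → ℤ) where
  toFun f p := f.coeff (⌊q * p.1⌋, ⌊q * p.2⌋)
  map_zero' := rfl
  map_add' _ _ := rfl

lemma gridFun_apply (q : ℝ) (f : ℤ[ℤ × ℤ]) (p : ℝ × ℝ) :
    gridFun q f p = f.coeff (⌊q * p.1⌋, ⌊q * p.2⌋) := rfl

lemma gridFun_rectPoly {q : ℝ} (hq : 0 < q) (a b c e : ℤ) :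
    gridFun q (rectPoly a b c e) = rectIndZ (a / q) (b / q) (c / q) (e / q) := by
  funext p
  simp only [gridFun_apply, coeff_rectPoly, rectIndZ, Int.le_floor, Int.floor_lt, div_le_iff₀ hq,
    lt_div_iff₀ hq, mul_comm q]

lemma gridFun_inflate (q : ℝ) {κ : ℕ} (hκ : 0 < κ) (f : ℤ[ℤ × ℤ]) (p : ℝ × ℝ) :
    gridFun q (inflate κ f) p = gridFun q f (p.1 / κ, p.2 / κ) := by
  simp only [gridFun_apply, coeff_inflate hκ, mul_div_assoc', Int.floor_div_natCast]

lemma gridFun_mul {q : ℝ} (hq : q ≠ 0) (f g : ℤ[ℤ × ℤ]) (p : ℝ × ℝ) :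
    gridFun q (f * g) p
      = ∑ d ∈ f.coeff.support, f.coeff d * gridFun q g (p.1 - d.1 / q, p.2 - d.2 / q) := by
  rw [gridFun_apply, coeff_mul_apply_left, Finsupp.sum]
  refine sum_congr rfl fun d _ => ?_
  simp only [gridFun_apply, mul_sub, mul_div_cancel₀ _ hq, Int.floor_sub_intCast, neg_add_eq_sub]
  rfl

lemma exists_fin_sum_eq {α : Type*} (M : Type*) [AddCommMonoid M] (S : Finset α) :
    ∃ (N : ℕ) (e : Fin N → α), ∀ f : α → M, ∑ x ∈ S, f x = ∑ i, f (e i) :=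
  ⟨S.card, fun i => S.equivFin.symm i, fun f => by
    rw [← sum_coe_sort, ← Equiv.sum_comp S.equivFin.symm]⟩

def RescalingsTileMultipleOfSquare (T : ℝ × ℝ → ℤ) : Prop :=
  ∃ w : ℕ, 0 < w ∧
      ∃ (s : ℝ), 0 < s ∧
        ∃ (N : ℕ) (c : Fin N → ℤ) (k : Fin N → ℕ) (v : Fin N → ℝ × ℝ),
          (∀ i, 0 < k i) ∧
          ∀ p : ℝ × ℝ, (w : ℤ) * rectIndZ 0 s 0 s p =
            ∑ i, c i * T ((p.1 - (v i).1) / (k i : ℝ), (p.2 - (v i).2) / (k i : ℝ))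

theorem rescalingsTileMultipleOfSquare_gridFun {q : ℕ} (hq : 0 < q) {P : ℤ[ℤ × ℤ]}
    (hP : augmentation P ≠ 0) : RescalingsTileMultipleOfSquare (gridFun q P) := by
  obtain ⟨m, hm, n, k, Q, hk, hQ⟩ :=
    exists_sum_mul_inflate_eq_smul_square P Int.dvd_natAbs_self
  obtain ⟨N, e, he⟩ := exists_fin_sum_eq ℤ (univ.sigma fun j => (Q j).coeff.support)
  have hq' : (0 : ℝ) < q := by exact_mod_cast hq
  refine ⟨(augmentation P).natAbs, Int.natAbs_pos.mpr hP, m / q, by positivity, N,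
    fun i => (Q (e i).1).coeff (e i).2, fun i => k (e i).1, fun i => ((e i).2.1 / q, (e i).2.2 / q),
    fun i => hk _, fun p => ?_⟩
  calc ((augmentation P).natAbs : ℤ) * rectIndZ 0 (m / q) 0 (m / q) p
      = gridFun q (((augmentation P).natAbs : ℤ) • rectPoly 0 m 0 m) p := by
        rw [map_zsmul, Pi.smul_apply, smul_eq_mul, gridFun_rectPoly hq']
        simp only [Int.cast_zero, zero_div, Int.cast_natCast]
    _ = ∑ j, ∑ d ∈ (Q j).coeff.support,
          (Q j).coeff d * gridFun q P ((p.1 - d.1 / q) / k j, (p.2 - d.2 / q) / k j) := by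
        simp only [← hQ, map_sum, Finset.sum_apply, gridFun_mul hq'.ne', gridFun_inflate _ (hk _)]
    _ = _ := by
        rw [← sum_sigma (f := fun x : (_ : Fin n) × (ℤ × ℤ) => (Q x.1).coeff x.2
          * gridFun q P ((p.1 - (x.2.1 : ℝ) / q) / k x.1, (p.2 - (x.2.2 : ℝ) / q) / k x.1)), he]

lemma exists_common_denominator (S : Finset ℚ) : ∃ q : ℕ, 0 < q ∧ ∀ r ∈ S, ∃ B : ℤ, r = B / q := by
  have hq : 0 < ∏ r ∈ S, r.den := prod_pos fun r _ => r.den_pos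
  refine ⟨_, hq, fun r hr => ?_⟩
  obtain ⟨t, ht⟩ := dvd_prod_of_mem Rat.den hr
  have ht0 : (t : ℚ) ≠ 0 := Nat.cast_ne_zero.mpr (right_ne_zero_of_mul (ht ▸ hq.ne'))
  refine ⟨r.num * t, ?_⟩
  rw [ht, Nat.cast_mul, Int.cast_mul, Int.cast_natCast, mul_div_mul_right _ _ ht0, Rat.num_div_den]

theorem rescalingsTileMultipleOfSquare_of_intCorners {T : ℝ × ℝ → ℤ} {n q : ℕ} (hq : 0 < q)
    (a : Fin n → ℤ) {B₁ B₂ C₁ C₂ : Fin n → ℤ} (hB : ∀ i, B₁ i ≤ B₂ i) (hC : ∀ i, C₁ i ≤ C₂ i)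
    (hT : ∀ p, T p = ∑ i, a i * rectIndZ (B₁ i / q) (B₂ i / q) (C₁ i / q) (C₂ i / q) p)
    (harea : ∑ i, a i * ((B₂ i - B₁ i) * (C₂ i - C₁ i)) ≠ 0) :
    RescalingsTileMultipleOfSquare T := by
  set P := ∑ i, a i • rectPoly (B₁ i) (B₂ i) (C₁ i) (C₂ i)
  have hTP : T = gridFun q P := by
    funext p
    simp only [P, hT, map_sum, map_zsmul, Finset.sum_apply, Pi.smul_apply, smul_eq_mul,
      gridFun_rectPoly (Nat.cast_pos.mpr hq)]
  have hP : augmentation P = ∑ i, a i * ((B₂ i - B₁ i) * (C₂ i - C₁ i)) := by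
    simp only [P, map_sum, map_zsmul, augmentation_rectPoly (hB _) (hC _), smul_eq_mul]
  rw [hTP]
  exact rescalingsTileMultipleOfSquare_gridFun hq (hP ▸ harea)

/-- If a ℤ-weighted tile `T` made of rectangles with rational corners has nonzero
weighted area, then there is a positive integer `w` such that the family of
positive-integer rescalings of `T` ℤ-tiles `w` times a square. -/
theorem Tnat_tiles_weighted_square
    (T : ℝ × ℝ → ℤ) (n : ℕ) (a : Fin n → ℤ) (b1 b2 c1 c2 : Fin n → ℚ)
    (hb : ∀ i, b1 i < b2 i) (hc : ∀ i, c1 i < c2 i)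
    (hT : ∀ p, T p = ∑ i, a i * rectIndZ (b1 i) (b2 i) (c1 i) (c2 i) p)
    (harea : (∑ i, (a i : ℚ) * (b2 i - b1 i) * (c2 i - c1 i)) ≠ 0) :
    ∃ w : ℕ, 0 < w ∧
      ∃ (s : ℝ), 0 < s ∧
        ∃ (N : ℕ) (c : Fin N → ℤ) (k : Fin N → ℕ) (v : Fin N → ℝ × ℝ),
          (∀ i, 0 < k i) ∧
          ∀ p : ℝ × ℝ, (w : ℤ) * rectIndZ 0 s 0 s p =
            ∑ i, c i * T ((p.1 - (v i).1) / (k i : ℝ), (p.2 - (v i).2) / (k i : ℝ)) := by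
  obtain ⟨q, hq, hden⟩ :=
    exists_common_denominator (univ.image b1 ∪ univ.image b2 ∪ univ.image c1 ∪ univ.image c2)
  choose B₁ hB₁ using fun i => hden (b1 i) (by simp)
  choose B₂ hB₂ using fun i => hden (b2 i) (by simp)
  choose C₁ hC₁ using fun i => hden (c1 i) (by simp)
  choose C₂ hC₂ using fun i => hden (c2 i) (by simp)
  simp only [hB₁, hB₂, hC₁, hC₂] at hb hc hT harea
  have hqQ : (0 : ℚ) < q := by exact_mod_cast hq
  refine rescalingsTileMultipleOfSquare_of_intCorners hq a
    (fun i => by exact_mod_cast ((div_lt_div_iff_of_pos_right hqQ).mp (hb i)).le)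
    (fun i => by exact_mod_cast ((div_lt_div_iff_of_pos_right hqQ).mp (hc i)).le)
    (fun p => by exact_mod_cast hT p) fun h0 => harea ?_
  calc ∑ i, (a i : ℚ) * (B₂ i / q - B₁ i / q) * (C₂ i / q - C₁ i / q)
      = ((∑ i, a i * ((B₂ i - B₁ i) * (C₂ i - C₁ i)) : ℤ) : ℚ) / q ^ 2 := by
        push_cast
        rw [sum_div]
        exact sum_congr rfl fun i _ => by field_simp
    _ = 0 := by rw [h0, Int.cast_zero, zero_div]
end

section
/- Let T be a ℚ-weighted lattice tile whose weights w : ℤ×ℤ → ℚ are supported in ℕ×ℕ and whose weighted area ∑ w_{ij} is nonzero. Let f_T = ∑ w_{ij}X^iY^j(X−1)(Y−1) ∈ ℚ[X,Y], let m be the degree of f_T in X and n its degree in Y. If α, β ∈ ℂ^× satisfy f_T(α^k, β^k) = 0 for every integer k ≥ 1, then either α^k = 1 for some 1 ≤ k ≤ 2mn or β^k = 1 for some 1 ≤ k ≤ 2mn. -/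
/-!
Write `f_T = g · (X - 1)(Y - 1)` with `g = ∑ w_{ij} X^i Y^j`, so `g(1, 1)` is the weighted
area. The hypothesis says `∑_s c_s (α^{s₀} β^{s₁})^k = 0` for all `k ≥ 1`, where `c_s` are the
coefficients of `f_T`; by Vandermonde, the coefficients summed over each class of exponents `s`
with the same value `α^{s₀} β^{s₁}` vanish. Differences of exponents within a class are
multiplicative relations `α^i β^j = 1` with `|i| ≤ m`, `|j| ≤ n`. A relation on an axis gives
`α^{|i|} = 1` or `β^{|j|} = 1`, and two independent relations give `α^{ij' - i'j} = 1`.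
Otherwise all relations lie on one line `a i + b j = 0` with `a, b ≠ 0`; then every class lies in
a fibre of `s ↦ a s₀ + b s₁`, so `f_T(t^a, t^b) = 0` for all `t ≠ 0`, hence `g(t^a, t^b) = 0`
for `t > 1`, and letting `t → 1` gives `g(1, 1) = 0`, contradicting the nonzero area.
-/

open Finset MvPolynomial

/-- The polynomial `f_T = ∑ w_{ij} X^i Y^j (X-1)(Y-1) ∈ ℚ[X,Y]` of a ℚ-weighted
lattice tile with weights `w` supported in `ℕ × ℕ` (here `X = X 0`, `Y = X 1`). -/
noncomputable def firstQuadrantPolyQ (w : ℤ × ℤ →₀ ℚ) : MvPolynomial (Fin 2) ℚ :=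
  w.sum fun ij a =>
    C a * X 0 ^ ij.1.toNat * X 1 ^ ij.2.toNat * (X 0 - 1) * (X 1 - 1)

theorem Finset.eq_zero_of_forall_sum_mul_pow_eq_zero {R : Type*} [CommRing R] [IsDomain R]
    {T : Finset R} (hT : (0 : R) ∉ T) {c : R → R}
    (h : ∀ k : ℕ, 1 ≤ k → ∑ t ∈ T, c t * t ^ k = 0) : ∀ t ∈ T, c t = 0 := by
  -- Vandermonde applied to `c t * t`, which turns the exponents `k ≥ 1` into `k ≥ 0`.
  let e := T.equivFin.symm
  have hv := Matrix.eq_zero_of_forall_pow_sum_mul_pow_eq_zero (f := fun j => (e j : R))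
    (v := fun j => c (e j) * e j) (Subtype.val_injective.comp e.injective) fun i => by
      simp_rw [mul_assoc, ← pow_succ']
      rw [e.sum_comp (fun t : T => c t * (t : R) ^ ((i : ℕ) + 1)),
        Finset.sum_coe_sort T (fun t => c t * t ^ ((i : ℕ) + 1))]
      exact h _ le_add_self
  intro t ht
  have := congrFun hv (e.symm ⟨t, ht⟩)
  simp only [Equiv.apply_symm_apply, Pi.zero_apply] at this
  exact (mul_eq_zero.1 this).resolve_right (ne_of_mem_of_not_mem ht hT)

theorem Finset.sum_fiber_eq_zero_of_forall_sum_mul_pow_eq_zero {ι R : Type*} [CommRing R]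
    [IsDomain R] [DecidableEq R] {S : Finset ι} {z c : ι → R} (hz : ∀ s ∈ S, z s ≠ 0)
    (h : ∀ k : ℕ, 1 ≤ k → ∑ s ∈ S, c s * z s ^ k = 0) :
    ∀ s₀ ∈ S, ∑ s ∈ S with z s = z s₀, c s = 0 := by
  have := (S.image z).eq_zero_of_forall_sum_mul_pow_eq_zero
    (c := fun t => ∑ s ∈ S with z s = t, c s) (by simpa using hz) fun k hk => by
      rw [← h k hk,
        ← Finset.sum_fiberwise_of_maps_to (g := z) fun s hs => mem_image_of_mem z hs]
      refine Finset.sum_congr rfl fun t _ => ?_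
      rw [Finset.sum_mul]
      exact Finset.sum_congr rfl fun s hs => by rw [(Finset.mem_filter.1 hs).2]
  exact fun s₀ hs₀ => this (z s₀) (mem_image_of_mem z hs₀)

theorem Finset.sum_mul_eq_zero_of_sum_fiber_eq_zero {ι β R : Type*} [CommSemiring R]
    [DecidableEq β] {S : Finset ι} {z : ι → β} {c u : ι → R}
    (hc : ∀ s₀ ∈ S, ∑ s ∈ S with z s = z s₀, c s = 0)
    (hu : ∀ s ∈ S, ∀ s' ∈ S, z s = z s' → u s = u s') : ∑ s ∈ S, c s * u s = 0 := by
  rw [← Finset.sum_fiberwise_of_maps_to (g := z) fun s hs => mem_image_of_mem z hs]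
  refine Finset.sum_eq_zero fun t ht => ?_
  obtain ⟨s₀, hs₀, rfl⟩ := Finset.mem_image.1 ht
  rw [Finset.sum_congr rfl fun s hs => by
    rw [hu s (Finset.mem_filter.1 hs).1 s₀ hs₀ (Finset.mem_filter.1 hs).2], ← Finset.sum_mul,
    hc s₀ hs₀, zero_mul]

theorem pow_natAbs_eq_one_of_zpow_eq_one {G : Type*} [GroupWithZero G] {x : G} {k : ℤ}
    (h : x ^ k = 1) : x ^ k.natAbs = 1 := by
  cases k <;> simpa using h

theorem zpow_det_eq_one {G : Type*} [CommGroupWithZero G] {α β : G} (hα : α ≠ 0)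
    (hβ : β ≠ 0) {a b c d : ℤ} (h₁ : α ^ a * β ^ b = 1) (h₂ : α ^ c * β ^ d = 1) :
    α ^ (a * d - c * b) = 1 := by
  have : α ^ (a * d) * β ^ (b * d) = α ^ (c * b) * β ^ (b * d) :=
    calc _ = (α ^ a * β ^ b) ^ d := by rw [mul_zpow, zpow_mul, zpow_mul]
      _ = (α ^ c * β ^ d) ^ b := by rw [h₁, h₂, one_zpow, one_zpow]
      _ = _ := by rw [mul_zpow, ← zpow_mul, ← zpow_mul, mul_comm d b]
  rw [zpow_sub₀ hα, mul_right_cancel₀ (zpow_ne_zero _ hβ) this, div_self (zpow_ne_zero _ hα)]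

theorem exists_axis_or_det_ne_zero_or_collinear (V : Set (ℤ × ℤ)) :
    (∃ v ∈ V, v ≠ 0 ∧ (v.1 = 0 ∨ v.2 = 0)) ∨
      (∃ v ∈ V, ∃ u ∈ V, v.1 * u.2 - u.1 * v.2 ≠ 0) ∨
      ∃ a b : ℤ, a ≠ 0 ∧ b ≠ 0 ∧ ∀ v ∈ V, a * v.1 + b * v.2 = 0 := by
  by_cases hV : ∃ v ∈ V, v ≠ 0
  · obtain ⟨v, hv, hv0⟩ := hV
    by_cases haxis : v.1 = 0 ∨ v.2 = 0
    · exact Or.inl ⟨v, hv, hv0, haxis⟩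
    by_cases hdet : ∃ u ∈ V, v.1 * u.2 - u.1 * v.2 ≠ 0
    · obtain ⟨u, hu, hvu⟩ := hdet
      exact Or.inr (Or.inl ⟨v, hv, u, hu, hvu⟩)
    push Not at haxis hdet
    exact Or.inr (Or.inr ⟨v.2, -v.1, haxis.2, neg_ne_zero.2 haxis.1,
      fun u hu => by linear_combination -hdet u hu⟩)
  · push Not at hV
    exact Or.inr (Or.inr ⟨1, 1, one_ne_zero, one_ne_zero, fun v hv => by simp [hV v hv]⟩)

theorem exists_pow_eq_one_or_collinear_of_relations {G : Type*} [CommGroupWithZero G]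
    {α β : G} (hα : α ≠ 0) (hβ : β ≠ 0) {m n : ℕ} (hm : 1 ≤ m) (hn : 1 ≤ n) {V : Set (ℤ × ℤ)}
    (hrel : ∀ v ∈ V, α ^ v.1 * β ^ v.2 = 1)
    (hbox : ∀ v ∈ V, v.1.natAbs ≤ m ∧ v.2.natAbs ≤ n) :
    (∃ k : ℕ, 1 ≤ k ∧ k ≤ 2 * m * n ∧ α ^ k = 1) ∨
      (∃ k : ℕ, 1 ≤ k ∧ k ≤ 2 * m * n ∧ β ^ k = 1) ∨
      ∃ a b : ℤ, a ≠ 0 ∧ b ≠ 0 ∧ ∀ v ∈ V, a * v.1 + b * v.2 = 0 := by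
  have hmn : m + n ≤ 2 * m * n := by nlinarith
  rcases exists_axis_or_det_ne_zero_or_collinear V with
    ⟨v, hv, hv0, h | h⟩ | ⟨v, hv, u, hu, hvu⟩ | h
  · have hβv : β ^ v.2 = 1 := by simpa [h] using hrel v hv
    have : v.2 ≠ 0 := fun h' => hv0 (Prod.ext h h')
    have := hbox v hv
    exact Or.inr (Or.inl
      ⟨v.2.natAbs, by omega, by omega, pow_natAbs_eq_one_of_zpow_eq_one hβv⟩)
  · have hαv : α ^ v.1 = 1 := by simpa [h] using hrel v hv
    have : v.1 ≠ 0 := fun h' => hv0 (Prod.ext h' h)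
    have := hbox v hv
    exact Or.inl ⟨v.1.natAbs, by omega, by omega, pow_natAbs_eq_one_of_zpow_eq_one hαv⟩
  · refine Or.inl ⟨_, Int.natAbs_pos.2 hvu, ?_,
      pow_natAbs_eq_one_of_zpow_eq_one (zpow_det_eq_one hα hβ (hrel v hv) (hrel u hu))⟩
    have h₁ := Nat.mul_le_mul (hbox v hv).1 (hbox u hu).2
    have h₂ := Nat.mul_le_mul (hbox u hu).1 (hbox v hv).2
    have := Int.natAbs_sub_le (v.1 * u.2) (u.1 * v.2)
    rw [Int.natAbs_mul, Int.natAbs_mul] at this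
    linarith
  · exact Or.inr (Or.inr h)

namespace MvPolynomial

theorem degreeOf_X_sub_one {σ R : Type*} [CommRing R] [Nontrivial R] (i : σ) :
    degreeOf i (X i - 1 : MvPolynomial σ R) = 1 := by
  rw [sub_eq_add_neg, ← C_1, ← C_neg, degreeOf_add_eq_of_degreeOf_lt] <;> simp

theorem X_sub_one_ne_zero {σ R : Type*} [CommRing R] [Nontrivial R] (i : σ) :
    (X i - 1 : MvPolynomial σ R) ≠ 0 :=
  ne_zero_of_degreeOf_ne_zero (i := i) (by simp [degreeOf_X_sub_one])

theorem degreeOf_mul_X_sub_one {σ R : Type*} [CommRing R] [IsDomain R]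
    {p : MvPolynomial σ R} (hp : p ≠ 0) (i : σ) :
    degreeOf i (p * (X i - 1)) = degreeOf i p + 1 := by
  rw [degreeOf_mul_eq hp (X_sub_one_ne_zero i), degreeOf_X_sub_one]

theorem aeval_pair_eq_sum {R A : Type*} [CommSemiring R] [CommSemiring A] [Algebra R A]
    (p : MvPolynomial (Fin 2) R) (x y : A) :
    aeval ![x, y] p = ∑ s ∈ p.support, algebraMap R A (coeff s p) * (x ^ s 0 * y ^ s 1) := by
  simp [aeval_def, eval₂_eq', Fin.prod_univ_two]

theorem eval_zpow_pair_eq_sum {K : Type*} [Field K] (p : MvPolynomial (Fin 2) K) {t : K}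
    (ht : t ≠ 0) (a b : ℤ) :
    eval ![t ^ a, t ^ b] p = ∑ s ∈ p.support, coeff s p * t ^ (a * s 0 + b * s 1) := by
  rw [show eval ![t ^ a, t ^ b] p = aeval ![t ^ a, t ^ b] p from rfl, aeval_pair_eq_sum]
  refine Finset.sum_congr rfl fun s _ => ?_
  rw [zpow_add₀ ht, zpow_mul, zpow_mul, zpow_natCast, zpow_natCast, Algebra.algebraMap_self,
    RingHom.id_apply]

theorem eval_one_one_eq_zero_of_eval_zpow_mul_eq_zero {K : Type*} [Field K] [LinearOrder K]
    [IsStrictOrderedRing K] [TopologicalSpace K] [OrderTopology K]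
    (g : MvPolynomial (Fin 2) K) {a b : ℤ} (ha : a ≠ 0) (hb : b ≠ 0)
    (h : ∀ t : K, 1 < t → eval ![t ^ a, t ^ b] (g * ((X 0 - 1) * (X 1 - 1))) = 0) :
    eval ![1, 1] g = 0 := by
  set F : K → K := fun t => eval ![t ^ a, t ^ b] g
  have hF : ∀ t : K, 1 < t → F t = 0 := by
    intro t ht
    have hne : ∀ {c : ℤ}, c ≠ 0 → t ^ c - 1 ≠ 0 := fun hc =>
      sub_ne_zero.2 fun h1 =>
        hc (zpow_right_injective₀ (by positivity) ht.ne' (by simpa using h1))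
    simpa [hne ha, hne hb] using h t ht
  have hcont : ContinuousAt F 1 :=
    (continuous_eval g).continuousAt.comp <| continuousAt_pi.2 <| Fin.forall_fin_two.2
      ⟨continuousAt_zpow₀ _ _ (Or.inl one_ne_zero), continuousAt_zpow₀ _ _ (Or.inl one_ne_zero)⟩
  have : F 1 = 0 :=
    tendsto_nhds_unique (hcont.tendsto.mono_left (nhdsWithin_le_nhds (s := Set.Ioi 1)))
      (tendsto_const_nhds.congr' (Filter.eventuallyEq_of_mem self_mem_nhdsWithin
        fun t ht => (hF t ht).symm))
  simpa [F] using this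

end MvPolynomial

def collidingExponentDiffs {R G : Type*} [CommSemiring R] [Monoid G]
    (p : MvPolynomial (Fin 2) R) (α β : G) : Set (ℤ × ℤ) :=
  {v | ∃ s ∈ p.support, ∃ s' ∈ p.support, α ^ s 0 * β ^ s 1 = α ^ s' 0 * β ^ s' 1 ∧
    v = ((s 0 : ℤ) - s' 0, (s 1 : ℤ) - s' 1)}

section collidingExponentDiffs

variable {R G : Type*} [CommSemiring R] {p : MvPolynomial (Fin 2) R} {v : ℤ × ℤ}

theorem zpow_mul_zpow_eq_one_of_mem_collidingExponentDiffs [CommGroupWithZero G] {α β : G}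
    (hα : α ≠ 0) (hβ : β ≠ 0) (hv : v ∈ collidingExponentDiffs p α β) :
    α ^ v.1 * β ^ v.2 = 1 := by
  obtain ⟨s, -, s', -, hs, rfl⟩ := hv
  simp only [zpow_sub₀ hα, zpow_sub₀ hβ, zpow_natCast]
  field_simp
  exact hs

theorem natAbs_le_degreeOf_of_mem_collidingExponentDiffs [Monoid G] {α β : G}
    (hv : v ∈ collidingExponentDiffs p α β) :
    v.1.natAbs ≤ p.degreeOf 0 ∧ v.2.natAbs ≤ p.degreeOf 1 := by
  obtain ⟨s, hs, s', hs', -, rfl⟩ := hv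
  have := monomial_le_degreeOf 0 hs; have := monomial_le_degreeOf 0 hs'
  have := monomial_le_degreeOf 1 hs; have := monomial_le_degreeOf 1 hs'
  omega

end collidingExponentDiffs

theorem sum_coeff_fiber_eq_zero_of_aeval_pow_eq_zero {K : Type*} [Field K] [CharZero K]
    [DecidableEq K] {p : MvPolynomial (Fin 2) ℚ} {α β : K} (hα : α ≠ 0) (hβ : β ≠ 0)
    (h : ∀ k : ℕ, 1 ≤ k → aeval ![α ^ k, β ^ k] p = 0) :
    ∀ s₀ ∈ p.support, ∑ s ∈ p.support with α ^ s 0 * β ^ s 1 = α ^ s₀ 0 * β ^ s₀ 1,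
      coeff s p = 0 := by
  intro s₀ hs₀
  have := Finset.sum_fiber_eq_zero_of_forall_sum_mul_pow_eq_zero
    (z := fun s => α ^ s 0 * β ^ s 1) (c := fun s => ((coeff s p : ℚ) : K))
    (fun s _ => mul_ne_zero (pow_ne_zero _ hα) (pow_ne_zero _ hβ)) (fun k hk => by
      rw [← h k hk, aeval_pair_eq_sum]
      exact Finset.sum_congr rfl fun s _ => by simp only [eq_ratCast]; ring) s₀ hs₀
  exact_mod_cast this

noncomputable def weightPoly (w : ℤ × ℤ →₀ ℚ) : MvPolynomial (Fin 2) ℚ :=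
  w.sum fun ij a => C a * X 0 ^ ij.1.toNat * X 1 ^ ij.2.toNat

theorem firstQuadrantPolyQ_eq_weightPoly_mul (w : ℤ × ℤ →₀ ℚ) :
    firstQuadrantPolyQ w = weightPoly w * ((X 0 - 1) * (X 1 - 1)) := by
  rw [firstQuadrantPolyQ, weightPoly, Finsupp.sum_mul]
  exact Finsupp.sum_congr fun _ _ => by ring

theorem eval_one_one_weightPoly (w : ℤ × ℤ →₀ ℚ) :
    eval ![1, 1] (weightPoly w) = w.sum fun _ a => a := by
  rw [weightPoly, map_finsuppSum]
  exact Finsupp.sum_congr fun _ _ => by simp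

theorem one_le_degreeOf_firstQuadrantPolyQ {w : ℤ × ℤ →₀ ℚ}
    (harea : (w.sum fun _ a => a) ≠ 0) (i : Fin 2) : 1 ≤ (firstQuadrantPolyQ w).degreeOf i := by
  have hg : weightPoly w ≠ 0 := fun h => harea (by rw [← eval_one_one_weightPoly, h, map_zero])
  rw [firstQuadrantPolyQ_eq_weightPoly_mul]
  revert i
  refine Fin.forall_fin_two.2 ⟨?_, ?_⟩
  · rw [mul_left_comm, mul_comm, degreeOf_mul_X_sub_one (mul_ne_zero hg (X_sub_one_ne_zero 1))]
    omega
  · rw [← mul_assoc, degreeOf_mul_X_sub_one (mul_ne_zero hg (X_sub_one_ne_zero 0))]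
    omega

theorem common_zeros_are_near_roots_of_unity_general (w : ℤ × ℤ →₀ ℚ)
    (harea : (w.sum fun _ a => a) ≠ 0)
    (m n : ℕ)
    (hm : m = (firstQuadrantPolyQ w).degreeOf 0)
    (hn : n = (firstQuadrantPolyQ w).degreeOf 1)
    (α β : ℂ) (hα : α ≠ 0) (hβ : β ≠ 0)
    (hzero : ∀ k : ℕ, 1 ≤ k → aeval ![α ^ k, β ^ k] (firstQuadrantPolyQ w) = 0) :
    (∃ k : ℕ, 1 ≤ k ∧ k ≤ 2 * m * n ∧ α ^ k = 1) ∨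
      (∃ k : ℕ, 1 ≤ k ∧ k ≤ 2 * m * n ∧ β ^ k = 1) := by
  classical
  have hclass := sum_coeff_fiber_eq_zero_of_aeval_pow_eq_zero hα hβ hzero
  obtain h | h | ⟨a, b, ha, hb, hab⟩ := exists_pow_eq_one_or_collinear_of_relations hα hβ
    (hm ▸ one_le_degreeOf_firstQuadrantPolyQ harea 0)
    (hn ▸ one_le_degreeOf_firstQuadrantPolyQ harea 1)
    (fun _ => zpow_mul_zpow_eq_one_of_mem_collidingExponentDiffs hα hβ)
    (fun _ hv => hm ▸ hn ▸ natAbs_le_degreeOf_of_mem_collidingExponentDiffs hv)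
  · exact Or.inl h
  · exact Or.inr h
  have hg : eval ![1, 1] (weightPoly w) ≠ 0 := by rwa [eval_one_one_weightPoly]
  refine absurd (eval_one_one_eq_zero_of_eval_zpow_mul_eq_zero _ ha hb fun t ht => ?_) hg
  rw [← firstQuadrantPolyQ_eq_weightPoly_mul, eval_zpow_pair_eq_sum _ (by positivity) a b]
  exact Finset.sum_mul_eq_zero_of_sum_fiber_eq_zero hclass fun s hs s' hs' hzs =>
    congrArg (t ^ ·) (by linear_combination hab _ ⟨s, hs, s', hs', hzs, rfl⟩)

/-- If a ℚ-weighted lattice tile `T` in the first quadrant has nonzero weighted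
area, `m` and `n` are the `X`- and `Y`-degrees of `f_T`, and `α, β ∈ ℂ^×`
satisfy `f_T(α^k, β^k) = 0` for all `k ≥ 1`, then `α^k = 1` or `β^k = 1` for
some `1 ≤ k ≤ 2mn`. -/
theorem common_zeros_are_near_roots_of_unity (w : ℤ × ℤ →₀ ℚ)
    (hsupp : ∀ q ∈ w.support, 0 ≤ q.1 ∧ 0 ≤ q.2)
    (harea : (w.sum fun _ a => a) ≠ 0)
    (m n : ℕ)
    (hm : m = (firstQuadrantPolyQ w).degreeOf 0)
    (hn : n = (firstQuadrantPolyQ w).degreeOf 1)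
    (α β : ℂ) (hα : α ≠ 0) (hβ : β ≠ 0)
    (hzero : ∀ k : ℕ, 1 ≤ k → aeval ![α ^ k, β ^ k] (firstQuadrantPolyQ w) = 0) :
    (∃ k : ℕ, 1 ≤ k ∧ k ≤ 2 * m * n ∧ α ^ k = 1) ∨
      (∃ k : ℕ, 1 ≤ k ∧ k ≤ 2 * m * n ∧ β ^ k = 1) :=
  common_zeros_are_near_roots_of_unity_general w harea m n hm hn α β hα hβ hzero
end

section
/- Let T be a ℚ-weighted lattice tile with nonzero weighted area, with polynomial f_T ∈ ℚ[X^ℤ,Y^ℤ]. For each integer k ≥ 1 let f_{T(k)} be the image of f_T under the ℚ-algebra endomorphism of ℚ[X^ℤ,Y^ℤ] induced by the group endomorphism (i,j) ↦ (ki,kj) of ℤ×ℤ (so f_{T(k)}(X,Y) = f_T(X^k,Y^k)). Then there exists a positive integer l such that g_l := (X^l−1)(Y^l−1) lies in the ideal of ℚ[X^ℤ,Y^ℤ] generated by {f_{T(k)} : k ≥ 1}. -/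
/-!
`f_T = P · g_1` with `P = ∑ w_{ij} X^i Y^j`, so `f_{T(k)} = P(X^k, Y^k) · g_k`. The polynomials
`P(X^j, Y^j)`, `1 ≤ j ≤ n = #supp w`, generate the unit ideal: modulo a maximal ideal they say
`∑ w_p x_p^j = 0` for the (nonzero) images `x_p` of the monomials, and a polynomial vanishing at
all `x_p` but not at `0` turns these `n` power sums into `∑ w_p = 0`. Since `g_j ∣ g_{n!}` for
`j ≤ n`, every `P(X^j, Y^j) · g_{n!}` is a multiple of `f_{T(j)}`, hence `g_{n!}` lies in the ideal.
-/

open Finset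

/-- The polynomial `f_T = ∑ w_{ij} X^i Y^j (X-1)(Y-1)` of the ℚ-weighted
lattice tile with weights `w`, in `ℚ[X^ℤ, Y^ℤ] = AddMonoidAlgebra ℚ (ℤ × ℤ)`. -/
noncomputable def latticePolyQ (w : ℤ × ℤ →₀ ℚ) : AddMonoidAlgebra ℚ (ℤ × ℤ) :=
  w.sum fun ij a => AddMonoidAlgebra.single ij a *
    ((AddMonoidAlgebra.single ((1 : ℤ), (0 : ℤ)) (1 : ℚ) - 1) *
      (AddMonoidAlgebra.single ((0 : ℤ), (1 : ℤ)) (1 : ℚ) - 1))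

theorem Finset.sum_eq_zero_of_forall_sum_mul_pow_eq_zero {ι R : Type*} [CommRing R] [IsDomain R]
    (s : Finset ι) (c x : ι → R) (hx : ∀ i ∈ s, x i ≠ 0)
    (h : ∀ j ∈ Icc 1 #s, ∑ i ∈ s, c i * x i ^ j = 0) : ∑ i ∈ s, c i = 0 := by
  open Polynomial in
  set Q : R[X] := ∏ i ∈ s, (X - C (x i))
  have hQ0 : Q.coeff 0 ≠ 0 := by
    simpa [Q, coeff_zero_eq_eval_zero, eval_prod, prod_ne_zero_iff] using hx
  have hdeg : Q.natDegree < #s + 1 := by simp [Q]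
  have hexpand : ∑ i ∈ s, c i * Q.eval (x i) = Q.coeff 0 * ∑ i ∈ s, c i := by
    simp_rw [eval_eq_sum_range' hdeg, mul_sum]
    rw [sum_comm, sum_range_succ', sum_eq_zero fun j hj => ?_, zero_add]
    · simp [mul_comm]
    · simp_rw [mul_left_comm (c _) (Q.coeff _), ← mul_sum]
      rw [h (j + 1) (by simpa using hj), mul_zero]
  have hvanish : ∑ i ∈ s, c i * Q.eval (x i) = 0 :=
    sum_eq_zero fun i hi => by simp [Q, eval_prod, prod_eq_zero hi]
  exact (mul_eq_zero.mp (hexpand ▸ hvanish)).resolve_left hQ0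

namespace AddMonoidAlgebra

variable {k G A : Type*}

theorem algHom_mapDomain_nsmul [CommSemiring k] [AddCommMonoid G] [Semiring A] [Algebra k A]
    (φ : k[G] →ₐ[k] A) (n : ℕ) (f : k[G]) :
    φ (mapDomain (n • ·) f) = f.coeff.sum fun g a => a • φ (single g 1) ^ n := by
  have h := lift_unique (φ.comp (mapDomainAlgHom k k (nsmulAddMonoidHom n))) f
  simp only [AlgHom.comp_apply, mapDomainAlgHom_apply, mapDomain_single,
    nsmulAddMonoidHom_apply] at h
  simp only [← map_pow, single_pow, one_pow]
  exact h

theorem isUnit_single_one [CommSemiring k] [AddGroup G] (g : G) : IsUnit (single g (1 : k)) :=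
  (Group.isUnit (Multiplicative.ofAdd g)).map (of k G)

theorem span_mapDomain_nsmul_eq_top [Field k] [AddCommGroup G] (f : k[G])
    (hf : (f.coeff.sum fun _ a => a) ≠ 0) :
    Ideal.span ((fun n : ℕ => mapDomain (n • ·) f) '' Set.Icc 1 #f.coeff.support) = ⊤ := by
  by_contra hne
  obtain ⟨m, hm, hle⟩ := Ideal.exists_le_maximal _ hne
  let _ := Ideal.Quotient.field m
  let φ := Ideal.Quotient.mkₐ k m
  apply hf
  apply (algebraMap k (k[G] ⧸ m)).injective
  rw [Finsupp.sum, map_sum, map_zero]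
  refine sum_eq_zero_of_forall_sum_mul_pow_eq_zero _ _ (fun g => φ (single g 1))
    (fun g _ => ((isUnit_single_one g).map φ).ne_zero) fun n hn => ?_
  have hmem : φ (mapDomain (n • ·) f) = 0 :=
    Ideal.Quotient.eq_zero_iff_mem.mpr (hle (Ideal.subset_span ⟨n, by simpa using hn, rfl⟩))
  simpa [algHom_mapDomain_nsmul, Finsupp.sum, Algebra.smul_def] using hmem

end AddMonoidAlgebra

open AddMonoidAlgebra

noncomputable def squarePoly (l : ℕ) : ℚ[ℤ × ℤ] :=
  (single ((l : ℤ), (0 : ℤ)) 1 - 1) * (single ((0 : ℤ), (l : ℤ)) 1 - 1)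

theorem squarePoly_eq_pow (l : ℕ) :
    squarePoly l =
      (single ((1 : ℤ), (0 : ℤ)) 1 ^ l - 1) * (single ((0 : ℤ), (1 : ℤ)) 1 ^ l - 1) := by
  simp [squarePoly, single_pow]

theorem squarePoly_dvd_squarePoly {m n : ℕ} (h : m ∣ n) : squarePoly m ∣ squarePoly n := by
  rw [squarePoly_eq_pow, squarePoly_eq_pow]
  exact mul_dvd_mul (dvd_pow_sub_one_of_dvd h) (dvd_pow_sub_one_of_dvd h)

theorem latticePolyQ_eq_mul_squarePoly_one (w : ℤ × ℤ →₀ ℚ) :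
    latticePolyQ w = ofCoeff w * squarePoly 1 := by
  rw [latticePolyQ, ← Finsupp.sum_mul, sum_coeff_single (ofCoeff w)]
  simp [squarePoly]

theorem mapDomain_scale_latticePolyQ (w : ℤ × ℤ →₀ ℚ) (k : ℕ) :
    mapDomain (fun q : ℤ × ℤ => ((k : ℤ) * q.1, (k : ℤ) * q.2)) (latticePolyQ w) =
      mapDomain (k • ·) (ofCoeff w) * squarePoly k := by
  have hscale : (fun q : ℤ × ℤ => ((k : ℤ) * q.1, (k : ℤ) * q.2)) =
      nsmulAddMonoidHom (α := ℤ × ℤ) k := by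
    ext q <;> simp
  rw [hscale, latticePolyQ_eq_mul_squarePoly_one, ← mapDomainRingHom_apply]
  simp only [squarePoly, Nat.cast_one, map_mul, map_sub, map_one, mapDomainRingHom_apply,
    mapDomain_single, nsmulAddMonoidHom_apply, Prod.smul_mk, smul_zero, nsmul_one]
  rfl

/-- If a ℚ-weighted lattice tile `T` has nonzero weighted area, then some
`g_l = (X^l - 1)(Y^l - 1)` lies in the ideal of `ℚ[X^ℤ, Y^ℤ]` generated by the
polynomials `f_{T(k)}(X,Y) = f_T(X^k, Y^k)`, `k ≥ 1`. -/
theorem square_poly_mem_rescaling_ideal (w : ℤ × ℤ →₀ ℚ)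
    (harea : (w.sum fun _ a => a) ≠ 0) :
    ∃ l : ℕ, 0 < l ∧
      (AddMonoidAlgebra.single ((l : ℤ), (0 : ℤ)) (1 : ℚ) - 1) *
          (AddMonoidAlgebra.single ((0 : ℤ), (l : ℤ)) (1 : ℚ) - 1) ∈
        Ideal.span {g : AddMonoidAlgebra ℚ (ℤ × ℤ) | ∃ k : ℕ, 1 ≤ k ∧
          g = AddMonoidAlgebra.mapDomain
            (fun q : ℤ × ℤ => ((k : ℤ) * q.1, (k : ℤ) * q.2)) (latticePolyQ w)} := by
  set n := #w.support
  refine ⟨n.factorial, n.factorial_pos, ?_⟩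
  refine Submodule.mem_of_span_top_of_smul_mem _ _
    (span_mapDomain_nsmul_eq_top (ofCoeff w) harea) _ ?_
  rintro ⟨_, j, ⟨hj1, hjn⟩, rfl⟩
  obtain ⟨q, hq⟩ := squarePoly_dvd_squarePoly (Nat.dvd_factorial hj1 hjn)
  change _ * squarePoly n.factorial ∈ _
  rw [hq, ← mul_assoc, ← mapDomain_scale_latticePolyQ]
  exact Ideal.mul_mem_right _ _ (Ideal.subset_span ⟨j, hj1, rfl⟩)
end
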